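/- Let G be a simple graph on a finite vertex type V with at least 3 vertices, let l : Sym2 V → ℕ assign a length to each edge, let E' be a finite set of edges of G, and let B be a natural number. Then the following are equivalent: (1) there exists a Hamiltonian cycle W of G whose edge list contains every edge of E' and whose total length ∑_{e ∈ W.edges} l(e) is at most B; (2) there exist a vertex u and a closed walk W : G.Walk u u such that the length of W equals Fintype.card V, every vertex of V appears in the support of W, every edge of E' appears in the edge list of W, and ∑_{e ∈ W.edges} l(e) ≤ B. -/

import Mathlib

/-! A closed walk of length `|V|` through every vertex has a tail of length `|V| - 1` that still
visits all `|V|` vertices, so the tail repeats no vertex and is a path; a closed walk of length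
at least 3 whose tail is a path is a cycle. -/

namespace SimpleGraph.Walk

variable {V : Type*} {G : SimpleGraph V}

theorem isPath_of_forall_mem_support_of_length_add_one_eq [Fintype V] {a b : V}
    {p : G.Walk a b} (hsupp : ∀ v, v ∈ p.support) (hlen : p.length + 1 = Fintype.card V) :
    p.IsPath := by
  classical
  have huniv : p.support.toFinset = Finset.univ := Finset.eq_univ_of_forall (by simpa using hsupp)
  rw [isPath_def, ← Multiset.coe_nodup, ← Multiset.toFinset_card_eq_card_iff_nodup]
  simp [huniv, hlen]

theorem mem_support_tail_of_mem_support {a : V} {p : G.Walk a a} (hp : ¬p.Nil) {v : V}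
    (hv : v ∈ p.support) : v ∈ p.tail.support := by
  rw [← cons_tail_support, List.mem_cons] at hv
  rcases hv with rfl | hv
  · exact p.tail.end_mem_support
  · rwa [support_tail_of_not_nil p hp]

theorem isHamiltonianCycle_iff_length_eq_and_forall_mem_support [Fintype V] [DecidableEq V]
    (hV : 3 ≤ Fintype.card V) {a : V} {p : G.Walk a a} :
    p.IsHamiltonianCycle ↔ p.length = Fintype.card V ∧ ∀ v, v ∈ p.support := by
  refine ⟨fun hp ↦ ⟨hp.length_eq, hp.mem_support⟩, fun ⟨hlen, hsupp⟩ ↦ ?_⟩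
  have hnil : ¬p.Nil := by rw [← length_eq_zero_iff]; omega
  have htail : p.tail.IsPath :=
    isPath_of_forall_mem_support_of_length_add_one_eq
      (fun v ↦ mem_support_tail_of_mem_support hnil (hsupp v))
      (by rw [length_tail_add_one hnil, hlen])
  exact isHamiltonianCycle_iff_isCycle_and_length_eq.mpr
    ⟨isCycle_iff_isPath_tail_and_le_length.mpr ⟨htail, hlen ▸ hV⟩, hlen⟩

end SimpleGraph.Walk

/-- Correctness of the filtering strategy: a Hamiltonian cycle containing all
edges of `E'` of total length at most `B` exists iff there is a closed walk of
length `Fintype.card V` visiting every vertex, using every edge of `E'`, and of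
total length at most `B`. -/
theorem ruralPostman_iff_closed_walk_filter
    {V : Type*} [Fintype V] [DecidableEq V] (G : SimpleGraph V)
    (hV : 3 ≤ Fintype.card V)
    (l : Sym2 V → ℕ) (E' : Finset (Sym2 V)) (B : ℕ) :
    (∃ (u : V) (W : G.Walk u u), W.IsHamiltonianCycle ∧
        (∀ e ∈ E', e ∈ W.edges) ∧ (W.edges.map l).sum ≤ B) ↔
      (∃ (u : V) (W : G.Walk u u), W.length = Fintype.card V ∧
        (∀ v : V, v ∈ W.support) ∧
        (∀ e ∈ E', e ∈ W.edges) ∧ (W.edges.map l).sum ≤ B) := by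
  simp only [SimpleGraph.Walk.isHamiltonianCycle_iff_length_eq_and_forall_mem_support hV, and_assoc]
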